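/- For every integer p ≥ 1 and every z ∈ [0,1], the B-spline basis supplemented for the periodic boundary condition forms a partition of unity: ∑_{n=0}^{l−p−1} b_n^p(z) + ∑_{n=−p}^{−1} b̃_n^p(z) = 1. -/

import Mathlib

/-- Uniform knots `z_j = j · Δz`. -/
noncomputable def knot (Δz : ℝ) (j : ℤ) : ℝ := j * Δz

/-- B-spline basis functions `b_n^p` on uniform knots, defined by the
Cox–de Boor recursion. -/
noncomputable def bspline (Δz : ℝ) : ℕ → ℤ → ℝ → ℝ
  | 0, n, z => if knot Δz n ≤ z ∧ z < knot Δz (n + 1) then 1 else 0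
  | p + 1, n, z =>
      ((z - knot Δz n) / (knot Δz (n + (p : ℤ) + 1) - knot Δz n)) * bspline Δz p n z +
      ((knot Δz (n + (p : ℤ) + 2) - z) / (knot Δz (n + (p : ℤ) + 2) - knot Δz (n + 1))) *
        bspline Δz p (n + 1) z
/-- Supplementary B-spline basis functions for the periodic boundary condition
on `[0,1]` with `Δz = 1/l`, for `n = -p, …, -1`. -/
noncomputable def bsplinePer (l p : ℕ) (n : ℤ) (z : ℝ) : ℝ :=
  if 0 ≤ z ∧ z < ((n : ℝ) + (p : ℝ) + 1) * (1 / (l : ℝ)) then bspline (1 / (l : ℝ)) p n z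
  else if 1 + (n : ℝ) * (1 / (l : ℝ)) ≤ z ∧ z ≤ 1 then bspline (1 / (l : ℝ)) p n (z - 1)
  else 0

/-!
On `[0,1]` each branch of `b̃_n^p` is one of `b_n^p`, `b_{n+l}^p` while the other one vanishes
there by support, so `b̃_n^p = b_n^p + b_{n+l}^p` and the left-hand side is
`∑_{n=-p}^{l-1} b_n^p(z)`.  Writing the Cox–de Boor recursion on uniform knots as
`b_n^{p+1} = w_n b_n^p + (1 - w_{n+1}) b_{n+1}^p` and summing over all `n ∈ ℤ`, the shift
`n ↦ n + 1` in the second sum makes the weights cancel, so `∑_n b_n^p ≡ 1` by induction on `p`.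
For `p ≥ 1` the function `b_n^p` also vanishes at its left knot `z_n`, so at `z = 1` the term
`n = l` drops out of the sum.
-/

section UniformKnots

variable {Δz : ℝ}

lemma knot_mono (hΔ : 0 ≤ Δz) : Monotone (knot Δz) := fun _ _ h =>
  mul_le_mul_of_nonneg_right (Int.cast_le.2 h) hΔ

lemma knot_strictMono (hΔ : 0 < Δz) : StrictMono (knot Δz) := fun _ _ h =>
  mul_lt_mul_of_pos_right (Int.cast_lt.2 h) hΔ

lemma bspline_eq_zero_of_lt_knot (hΔ : 0 ≤ Δz) (p : ℕ) {n : ℤ} {z : ℝ} (h : z < knot Δz n) :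
    bspline Δz p n z = 0 := by
  induction p generalizing n with
  | zero => simp [bspline, not_le.2 h]
  | succ p ih =>
    have h' : z < knot Δz (n + 1) := h.trans_le (knot_mono hΔ (by omega))
    simp only [bspline, ih h, ih h', mul_zero, add_zero]

lemma bspline_eq_zero_of_knot_le (hΔ : 0 ≤ Δz) (p : ℕ) {n : ℤ} {z : ℝ}
    (h : knot Δz (n + p + 1) ≤ z) : bspline Δz p n z = 0 := by
  induction p generalizing n with
  | zero => simp_all [bspline]
  | succ p ih =>
    have h₁ : knot Δz (n + p + 1) ≤ z := (knot_mono hΔ (by omega)).trans h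
    have h₂ : knot Δz (n + 1 + p + 1) ≤ z := (knot_mono hΔ (by omega)).trans h
    simp only [bspline, ih h₁, ih h₂, mul_zero, add_zero]

lemma bspline_add_int (p : ℕ) (n m : ℤ) (z : ℝ) :
    bspline Δz p (n + m) z = bspline Δz p n (z - m * Δz) := by
  induction p generalizing n with
  | zero =>
    simp only [bspline, knot, le_sub_iff_add_le, sub_lt_iff_lt_add]
    push_cast
    ring_nf
  | succ p ih =>
    simp only [bspline]
    rw [show n + m + 1 = n + 1 + m by ring, ih, ih]
    simp only [knot]
    push_cast
    ring

lemma mem_Icc_of_bspline_ne_zero (hΔ : 0 < Δz) {p : ℕ} {k n : ℤ} {z : ℝ}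
    (hk : knot Δz k ≤ z) (hk' : z < knot Δz (k + 1)) (h : bspline Δz p n z ≠ 0) :
    n ∈ Set.Icc (k - p) k := by
  have hn : knot Δz n < knot Δz (k + 1) :=
    (not_lt.1 fun h' => h (bspline_eq_zero_of_lt_knot hΔ.le p h')).trans_lt hk'
  have hn' : knot Δz k < knot Δz (n + p + 1) :=
    hk.trans_lt (not_le.1 fun h' => h (bspline_eq_zero_of_knot_le hΔ.le p h'))
  have hnk := (knot_strictMono hΔ).lt_iff_lt.1 hn
  have hkn := (knot_strictMono hΔ).lt_iff_lt.1 hn'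
  constructor <;> omega

lemma exists_knot_le_lt (hΔ : 0 < Δz) (z : ℝ) : ∃ k, knot Δz k ≤ z ∧ z < knot Δz (k + 1) := by
  refine ⟨⌊z / Δz⌋, ?_, ?_⟩
  · simpa [knot, le_div_iff₀ hΔ] using Int.floor_le (z / Δz)
  · simpa [knot, div_lt_iff₀ hΔ] using Int.lt_floor_add_one (z / Δz)

lemma hasFiniteSupport_bspline (hΔ : 0 < Δz) (p : ℕ) (z : ℝ) :
    (fun n => bspline Δz p n z).HasFiniteSupport := by
  obtain ⟨k, hk, hk'⟩ := exists_knot_le_lt hΔ z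
  exact (Set.finite_Icc (k - p) k).subset fun n => mem_Icc_of_bspline_ne_zero hΔ hk hk'

lemma bspline_succ_eq (hΔ : Δz ≠ 0) (p : ℕ) (n : ℤ) (z : ℝ) :
    bspline Δz (p + 1) n z =
      (z - knot Δz n) / ((p + 1) * Δz) * bspline Δz p n z +
        (1 - (z - knot Δz (n + 1)) / ((p + 1) * Δz)) * bspline Δz p (n + 1) z := by
  have hd : ((p : ℝ) + 1) * Δz ≠ 0 := mul_ne_zero (by positivity) hΔ
  simp only [bspline, knot]
  push_cast
  rw [show ((n : ℝ) + p + 1) * Δz - n * Δz = (p + 1) * Δz by ring,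
    show ((n : ℝ) + p + 2) * Δz - (n + 1) * Δz = (p + 1) * Δz by ring, one_sub_div hd]
  ring

theorem finsum_bspline (hΔ : 0 < Δz) (p : ℕ) (z : ℝ) : ∑ᶠ n, bspline Δz p n z = 1 := by
  induction p with
  | zero =>
    obtain ⟨k, hk, hk'⟩ := exists_knot_le_lt hΔ z
    rw [finsum_eq_single _ k fun n hn => not_ne_iff.1 fun h => hn ?_]
    · simp [bspline, hk, hk']
    · simpa using mem_Icc_of_bspline_ne_zero hΔ hk hk' h
  | succ p ih =>
    let b n := bspline Δz p n z
    let w n := (z - knot Δz n) / ((p + 1) * Δz)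
    have hb : b.HasFiniteSupport := hasFiniteSupport_bspline hΔ p z
    have hwb : (fun n => w n * b n).HasFiniteSupport := hb.fun_mul_right w
    have hwb' : (fun n => (1 - w n) * b n).HasFiniteSupport := hb.fun_mul_right _
    calc ∑ᶠ n, bspline Δz (p + 1) n z
        = ∑ᶠ n, w n * b n + ∑ᶠ n, (1 - w (n + 1)) * b (n + 1) := by
          simp only [bspline_succ_eq hΔ.ne']
          exact finsum_add_distrib hwb (hwb'.fun_comp_of_injective (add_left_injective 1))
      _ = ∑ᶠ n, w n * b n + ∑ᶠ n, (1 - w n) * b n := by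
          congr 1
          exact finsum_comp_equiv (Equiv.addRight (1 : ℤ)) (f := fun n => (1 - w n) * b n)
      _ = ∑ᶠ n, b n := by
          rw [← finsum_add_distrib hwb hwb']
          congr 1 with n
          ring
      _ = 1 := ih

lemma bspline_succ_knot_self (hΔ : 0 < Δz) (p : ℕ) (n : ℤ) :
    bspline Δz (p + 1) n (knot Δz n) = 0 := by
  rw [bspline_succ_eq hΔ.ne', sub_self, zero_div, zero_mul, zero_add,
    bspline_eq_zero_of_lt_knot hΔ.le p (knot_strictMono hΔ (lt_add_one n)), mul_zero]

lemma knot_lt_of_bspline_ne_zero (hΔ : 0 < Δz) {p : ℕ} (hp : p ≠ 0) {n : ℤ} {z : ℝ}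
    (h : bspline Δz p n z ≠ 0) : knot Δz n < z := by
  obtain ⟨q, rfl⟩ := Nat.exists_eq_succ_of_ne_zero hp
  refine lt_of_le_of_ne (not_lt.1 fun h' => h (bspline_eq_zero_of_lt_knot hΔ.le _ h')) ?_
  rintro rfl
  exact h (bspline_succ_knot_self hΔ q n)

theorem sum_Icc_bspline_eq_one (hΔ : 0 < Δz) {p : ℕ} (hp : p ≠ 0) {a b : ℤ} {z : ℝ}
    (ha : knot Δz a ≤ z) (hb : z ≤ knot Δz b) :
    ∑ n ∈ Finset.Icc (a - p) (b - 1), bspline Δz p n z = 1 := by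
  rw [← finsum_eq_sum_of_support_subset _ ?_, finsum_bspline hΔ]
  intro n hn
  have hnb := (knot_strictMono hΔ).lt_iff_lt.1 ((knot_lt_of_bspline_ne_zero hΔ hp hn).trans_le hb)
  have hna := (knot_strictMono hΔ).lt_iff_lt.1
    (ha.trans_lt (not_le.1 fun h => hn (bspline_eq_zero_of_knot_le hΔ.le p h)))
  rw [Finset.coe_Icc, Set.mem_Icc]
  omega

end UniformKnots

lemma sum_Icc_consecutive {M : Type*} [AddCommMonoid M] (f : ℤ → M) {a b b' c : ℤ}
    (hb : b + 1 = b') (hab : a ≤ b') (hbc : b ≤ c) :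
    ∑ n ∈ Finset.Icc a b, f n + ∑ n ∈ Finset.Icc b' c, f n = ∑ n ∈ Finset.Icc a c, f n := by
  rw [← Finset.sum_union (Finset.disjoint_left.2 fun n h h' => by simp at h h'; omega)]
  congr 1
  ext n
  simp only [Finset.mem_union, Finset.mem_Icc]
  omega

lemma bsplinePer_eq_add {l p : ℕ} (hl : p < l) (n : ℤ) {z : ℝ} (hz0 : 0 ≤ z) (hz1 : z ≤ 1) :
    bsplinePer l p n z = bspline (1 / l) p n z + bspline (1 / l) p (n + l) z := by
  have hl0 : (0 : ℝ) < l := Nat.cast_pos.2 (by omega)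
  have hΔ : (0 : ℝ) ≤ 1 / l := by positivity
  have hpl : knot (1 / l) (n + p + 1) ≤ knot (1 / l) (n + l) := knot_mono hΔ (by omega)
  have hleft : ((n : ℝ) + p + 1) * (1 / l) = knot (1 / l) (n + p + 1) := by simp [knot]
  have hright : 1 + (n : ℝ) * (1 / l) = knot (1 / l) (n + l) := by
    simp only [knot]
    push_cast
    field_simp
    ring
  unfold bsplinePer
  rw [hleft, hright]
  split_ifs with h₁ h₂
  · rw [bspline_eq_zero_of_lt_knot hΔ p (h₁.2.trans_le hpl), add_zero]
  · rw [bspline_eq_zero_of_knot_le hΔ p (hpl.trans h₂.1), zero_add, bspline_add_int]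
    push_cast
    field_simp
  · rw [bspline_eq_zero_of_knot_le hΔ p (not_lt.1 fun h => h₁ ⟨hz0, h⟩),
      bspline_eq_zero_of_lt_knot hΔ p (not_le.1 fun h => h₂ ⟨h, hz1⟩), add_zero]

/-- Partition of unity for the B-spline basis on `[0,1]` supplemented for the
periodic boundary condition. -/
theorem bspline_periodic_partition_of_unity (l p : ℕ) (hp : 1 ≤ p) (hl : p < l)
    (z : ℝ) (hz0 : 0 ≤ z) (hz1 : z ≤ 1) :
    (∑ n ∈ Finset.Icc (0 : ℤ) ((l : ℤ) - (p : ℤ) - 1), bspline (1 / (l : ℝ)) p n z) +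
      (∑ n ∈ Finset.Icc (-(p : ℤ)) (-1 : ℤ), bsplinePer l p n z) = 1 := by
  set b := fun n => bspline (1 / (l : ℝ)) p n z
  have hl0 : (0 : ℝ) < l := Nat.cast_pos.2 (by omega)
  have hunit : ∑ n ∈ Finset.Icc (0 - (p : ℤ)) (l - 1), b n = 1 :=
    sum_Icc_bspline_eq_one (one_div_pos.2 hl0) (by omega)
      (by rwa [knot, Int.cast_zero, zero_mul])
      (by rwa [knot, Int.cast_natCast, mul_one_div_cancel hl0.ne'])
  have hshift : ∑ n ∈ Finset.Icc (-(p : ℤ)) (-1), b (n + l) =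
      ∑ n ∈ Finset.Icc ((l : ℤ) - p) (l - 1), b n := by
    rw [← neg_add_eq_sub, ← neg_add_eq_sub, ← Finset.map_add_right_Icc, Finset.sum_map]
    rfl
  have hlow := sum_Icc_consecutive b (a := -p) (b := -1) (b' := 0) (c := l - p - 1)
    (by ring) (by omega) (by omega)
  have hhigh := sum_Icc_consecutive b (a := -p) (b := l - p - 1) (b' := l - p) (c := l - 1)
    (by ring) (by omega) (by omega)
  rw [Finset.sum_congr rfl fun n _ => bsplinePer_eq_add hl n hz0 hz1, Finset.sum_add_distrib]
  rw [zero_sub] at hunit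
  linarith
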